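/- Fix q \in (1/2, 1). Let X, Y be random vectors in R^d such that F_q(X) contains a ball of radius R_min/2, both F_q(X), F_q(Y) are contained in a ball of radius R_max + r centered at the origin, and \delta_q(X,Y) \le R_min/4. Then \|S(F_q(X)) - S(F_q(Y))\|_2 \le 6\sqrt{d} \cdot ((R_max + r)/R_min) \cdot \delta_q(X,Y), where S denotes the Steiner point. -/

import Mathlib

open MeasureTheory

/-- The CDF of a (law of a) real random variable. -/
noncomputable def rcdf (μ : Measure ℝ) (t : ℝ) : ℝ := (μ (Set.Iic t)).toReal

/-- The `q`-quantile `Q_q = inf {t : P(X ≤ t) ≥ q}`. -/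
noncomputable def quantile (μ : Measure ℝ) (q : ℝ) : ℝ := sInf {t | q ≤ rcdf μ t}

/-- The `q`-quantile of the marginal `⟨X, θ⟩` of a random vector with law `μ`. -/
noncomputable def dirQuantile {d : ℕ} (μ : Measure (EuclideanSpace ℝ (Fin d))) (q : ℝ)
    (θ : EuclideanSpace ℝ (Fin d)) : ℝ :=
  quantile (μ.map fun x => (inner ℝ x θ : ℝ)) q

/-- The `q`-floating body `F_q(X)`. -/
noncomputable def floatingBody {d : ℕ} (μ : Measure (EuclideanSpace ℝ (Fin d))) (q : ℝ) :
    Set (EuclideanSpace ℝ (Fin d)) :=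
  {x | ∀ θ : EuclideanSpace ℝ (Fin d), ‖θ‖ = 1 → (inner ℝ x θ : ℝ) ≤ dirQuantile μ q θ}

/-- The `q`-distance `δ_q(X,Y)`. -/
noncomputable def deltaQ {d : ℕ} (μ ν : Measure (EuclideanSpace ℝ (Fin d))) (q : ℝ) : ℝ :=
  ⨆ θ : Metric.sphere (0 : EuclideanSpace ℝ (Fin d)) 1,
    |dirQuantile μ q θ - dirQuantile ν q θ|

/-- The support function `h_K(θ) = max_{x ∈ K} ⟨x, θ⟩`. -/
noncomputable def suppFn {d : ℕ} (K : Set (EuclideanSpace ℝ (Fin d)))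
    (θ : EuclideanSpace ℝ (Fin d)) : ℝ :=
  sSup ((fun x => (inner ℝ x θ : ℝ)) '' K)

/-- The normalized uniform (Haar) measure on the unit sphere of `ℝ^d`. -/
noncomputable def sphereMeasure (d : ℕ) : Measure (EuclideanSpace ℝ (Fin d)) :=
  (μH[(d : ℝ) - 1] (Metric.sphere (0 : EuclideanSpace ℝ (Fin d)) 1))⁻¹ •
    (μH[(d : ℝ) - 1] : Measure (EuclideanSpace ℝ (Fin d))).restrict
      (Metric.sphere (0 : EuclideanSpace ℝ (Fin d)) 1)

/-- The Steiner point `S(K) = d ∫_{S^{d-1}} θ h_K(θ) dσ(θ)`. -/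
noncomputable def steinerPoint {d : ℕ} (K : Set (EuclideanSpace ℝ (Fin d))) :
    EuclideanSpace ℝ (Fin d) :=
  (d : ℝ) • ∫ θ, suppFn K θ • θ ∂(sphereMeasure d)

/-!
The floating body is the Wulff shape of the directional quantile function, and the hypothesis
`δ_q ≤ R_min / 4` says that the two quantile functions differ by at most `δ ≤ ρ := R_min / 2` on
the sphere, while `F_q(X)` contains a ball `B(a, ρ)`. Shrinking a point of either floating body
towards `a` by the factor `1 - δ / ρ` lands in the other one, so the support functions differ by at
most `ε = (δ / ρ) · 2 (R_max + r)`. The Steiner point is linear in the support function, and for a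
rotation-invariant probability measure on the sphere, Jensen's inequality gives
`∫ |⟪u, θ⟫| ≤ (∫ ⟪u, θ⟫²)^(1/2) = d^(-1/2)`; testing `S(K) - S(L)` against its own direction
therefore gives `‖S(K) - S(L)‖ ≤ d · ε / √d = √d ε`.
-/

open scoped RealInnerProductSpace

lemma abs_quantile_le {m : Measure ℝ} {q R : ℝ} (hR : q ≤ rcdf m R)
    (hlt : ∀ t < -R, rcdf m t < q) : |quantile m q| ≤ R := by
  have hbdd : ∀ t ∈ {t | q ≤ rcdf m t}, -R ≤ t := fun t ht ↦
    not_lt.1 fun h ↦ (hlt t h).not_ge ht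
  exact abs_le.2 ⟨le_csInf ⟨R, hR⟩ hbdd, csInf_le ⟨-R, hbdd⟩ hR⟩

section Quantile

variable {d : ℕ} (μ : Measure (EuclideanSpace ℝ (Fin d))) [IsProbabilityMeasure μ] {q : ℝ}

lemma exists_abs_dirQuantile_le (hq₀ : 0 < q) (hq₁ : q < 1) :
    ∃ R, ∀ θ : EuclideanSpace ℝ (Fin d), ‖θ‖ = 1 → |dirQuantile μ q θ| ≤ R := by
  have htail := tendsto_measure_norm_gt_of_isTightMeasureSet (isTightMeasureSet_singleton (μ := μ))
  simp only [Set.mem_singleton_iff, iSup_iSup_eq_left] at htail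
  obtain ⟨R, hR⟩ := (htail.eventually (gt_mem_nhds
    (ENNReal.ofReal_pos.2 (lt_min hq₀ (sub_pos.2 hq₁))))).exists
  replace hR : μ.real {x | R < ‖x‖} < min q (1 - q) := ENNReal.toReal_lt_of_lt_ofReal hR
  have hmeas : MeasurableSet {x : EuclideanSpace ℝ (Fin d) | R < ‖x‖} :=
    measurableSet_lt measurable_const measurable_norm
  refine ⟨R, fun θ hθ ↦ abs_quantile_le ?_ fun t ht ↦ ?_⟩
  all_goals
    rw [rcdf, ← measureReal_def, map_measureReal_apply (by fun_prop) measurableSet_Iic]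
  · calc q ≤ 1 - μ.real {x | R < ‖x‖} := by linarith [min_le_right q (1 - q)]
      _ = μ.real {x | R < ‖x‖}ᶜ := (probReal_compl_eq_one_sub hmeas).symm
      _ ≤ _ := measureReal_mono fun x hx ↦ ?_
    have := real_inner_le_norm x θ
    rw [hθ, mul_one] at this
    exact this.trans (not_lt.1 hx)
  · calc _ ≤ μ.real {x | R < ‖x‖} := measureReal_mono fun x hx ↦ ?_
      _ < q := hR.trans_le (min_le_left _ _)
    have := neg_le_of_abs_le (abs_real_inner_le_norm x θ)
    rw [hθ, mul_one] at this
    exact (lt_neg.1 ((show ⟪x, θ⟫ ≤ t from hx).trans_lt ht)).trans_le (neg_le.1 this)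

lemma abs_dirQuantile_sub_le_deltaQ (ν : Measure (EuclideanSpace ℝ (Fin d)))
    [IsProbabilityMeasure ν] (hq₀ : 0 < q) (hq₁ : q < 1) {θ : EuclideanSpace ℝ (Fin d)}
    (hθ : ‖θ‖ = 1) : |dirQuantile μ q θ - dirQuantile ν q θ| ≤ deltaQ μ ν q := by
  obtain ⟨M, hM⟩ := exists_abs_dirQuantile_le μ hq₀ hq₁
  obtain ⟨N, hN⟩ := exists_abs_dirQuantile_le ν hq₀ hq₁
  refine le_ciSup (f := fun θ : Metric.sphere (0 : EuclideanSpace ℝ (Fin d)) 1 ↦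
    |dirQuantile μ q θ - dirQuantile ν q θ|) ⟨M + N, ?_⟩ ⟨θ, mem_sphere_zero_iff_norm.2 hθ⟩
  rintro _ ⟨⟨θ, hθ⟩, rfl⟩
  rw [mem_sphere_zero_iff_norm] at hθ
  exact (abs_sub _ _).trans (add_le_add (hM θ hθ) (hN θ hθ))

end Quantile

section WulffShape

variable {E : Type*} [NormedAddCommGroup E] [InnerProductSpace ℝ E]

def wulffShape (P : E → ℝ) : Set E := {x | ∀ θ, ‖θ‖ = 1 → ⟪x, θ⟫ ≤ P θ}

lemma inner_add_le_of_closedBall_subset_wulffShape {P : E → ℝ} {a : E} {ρ : ℝ} (hρ : 0 ≤ ρ)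
    (h : Metric.closedBall a ρ ⊆ wulffShape P) {θ : E} (hθ : ‖θ‖ = 1) : ⟪a, θ⟫ + ρ ≤ P θ := by
  have hmem : a + ρ • θ ∈ Metric.closedBall a ρ := by
    rw [Metric.mem_closedBall, dist_eq_norm, add_sub_cancel_left, norm_smul, hθ, mul_one,
      Real.norm_of_nonneg hρ]
  simpa [inner_add_left, real_inner_smul_left, real_inner_self_eq_norm_sq, hθ] using h hmem θ hθ

/-- Shrinking `x` towards `a` by the factor `1 - δ / ρ` trades the slack `δ` of `x` against the
margin `ρ - δ` of `a`. -/
lemma exists_mem_wulffShape_norm_sub_le {P : E → ℝ} {a x : E} {ρ δ : ℝ} (hδ : 0 ≤ δ)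
    (hδρ : δ ≤ ρ) (ha : ∀ θ, ‖θ‖ = 1 → ⟪a, θ⟫ + (ρ - δ) ≤ P θ)
    (hx : ∀ θ, ‖θ‖ = 1 → ⟪x, θ⟫ ≤ P θ + δ) :
    ∃ y ∈ wulffShape P, ‖x - y‖ ≤ δ / ρ * ‖x - a‖ := by
  rcases hδ.eq_or_lt with rfl | hδ₀
  · exact ⟨x, fun θ hθ ↦ by simpa using hx θ hθ, by simp⟩
  have hρ : 0 < ρ := hδ₀.trans_le hδρ
  set t := δ / ρ
  have ht₁ : t ≤ 1 := (div_le_one hρ).2 hδρ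
  have htρ : t * ρ = δ := div_mul_cancel₀ δ hρ.ne'
  refine ⟨t • a + (1 - t) • x, fun θ hθ ↦ ?_, ?_⟩
  · rw [inner_add_left, real_inner_smul_left, real_inner_smul_left]
    nlinarith [ha θ hθ, hx θ hθ, div_nonneg hδ hρ.le]
  · rw [show x - (t • a + (1 - t) • x) = t • (x - a) by module, norm_smul,
      Real.norm_of_nonneg (div_nonneg hδ hρ.le)]

end WulffShape

section SupportFunction

variable {d : ℕ} {K L : Set (EuclideanSpace ℝ (Fin d))} {θ : EuclideanSpace ℝ (Fin d)}

lemma inner_le_suppFn (hK : Bornology.IsBounded K) {x : EuclideanSpace ℝ (Fin d)} (hx : x ∈ K) :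
    ⟪x, θ⟫ ≤ suppFn K θ := by
  obtain ⟨R, hR⟩ := hK.subset_closedBall 0
  refine le_csSup ⟨R * ‖θ‖, ?_⟩ ⟨x, hx, rfl⟩
  rintro _ ⟨y, hy, rfl⟩
  exact (real_inner_le_norm y θ).trans
    (mul_le_mul_of_nonneg_right (mem_closedBall_zero_iff.1 (hR hy)) (norm_nonneg θ))

lemma suppFn_le (hK : K.Nonempty) {b : ℝ} (h : ∀ x ∈ K, ⟪x, θ⟫ ≤ b) : suppFn K θ ≤ b :=
  csSup_le (hK.image _) (Set.forall_mem_image.2 h)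

lemma suppFn_le_add_of_forall_exists_norm_sub_le (hK : Bornology.IsBounded K) (hL : L.Nonempty)
    {ε : ℝ} (h : ∀ x ∈ L, ∃ y ∈ K, ‖x - y‖ ≤ ε) (hθ : ‖θ‖ ≤ 1) :
    suppFn L θ ≤ suppFn K θ + ε := by
  refine suppFn_le hL fun x hx ↦ ?_
  obtain ⟨y, hy, hxy⟩ := h x hx
  calc ⟪x, θ⟫ = ⟪y, θ⟫ + ⟪x - y, θ⟫ := by rw [← inner_add_left, add_sub_cancel]
    _ ≤ suppFn K θ + ‖x - y‖ * ‖θ‖ := add_le_add (inner_le_suppFn hK hy) (real_inner_le_norm _ _)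
    _ ≤ suppFn K θ + ε := by gcongr; exact mul_le_of_le_one_right (norm_nonneg _) hθ |>.trans hxy

lemma abs_suppFn_le {R : ℝ} (hK : K ⊆ Metric.closedBall 0 R) (hne : K.Nonempty) :
    |suppFn K θ| ≤ R * ‖θ‖ := by
  obtain ⟨x₀, hx₀⟩ := hne
  have hnorm : ∀ x ∈ K, |⟪x, θ⟫| ≤ R * ‖θ‖ := fun x hx ↦ (abs_real_inner_le_norm x θ).trans
    (mul_le_mul_of_nonneg_right (mem_closedBall_zero_iff.1 (hK hx)) (norm_nonneg θ))
  refine abs_le.2 ⟨?_, suppFn_le ⟨x₀, hx₀⟩ fun x hx ↦ (le_abs_self _).trans (hnorm x hx)⟩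
  exact (neg_le_of_abs_le (hnorm x₀ hx₀)).trans
    (inner_le_suppFn (Metric.isBounded_closedBall.subset hK) hx₀)

lemma lipschitzWith_suppFn {R : ℝ} (hK : K ⊆ Metric.closedBall 0 R) :
    LipschitzWith R.toNNReal (suppFn K) := by
  rcases K.eq_empty_or_nonempty with rfl | hne
  · have h : suppFn (∅ : Set (EuclideanSpace ℝ (Fin d))) = fun _ ↦ 0 := by ext; simp [suppFn]
    exact h ▸ (LipschitzWith.const 0).weaken bot_le
  refine LipschitzWith.of_le_add_mul _ fun θ₁ θ₂ ↦ suppFn_le hne fun x hx ↦ ?_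
  have hx' : ‖x‖ ≤ R := mem_closedBall_zero_iff.1 (hK hx)
  calc ⟪x, θ₁⟫ = ⟪x, θ₂⟫ + ⟪x, θ₁ - θ₂⟫ := by rw [← inner_add_right, add_sub_cancel]
    _ ≤ suppFn K θ₂ + R * dist θ₁ θ₂ := by
      rw [dist_eq_norm]
      gcongr
      · exact inner_le_suppFn (Metric.isBounded_closedBall.subset hK) hx
      · exact (real_inner_le_norm _ _).trans (by gcongr)
    _ = _ := by rw [Real.coe_toNNReal R ((norm_nonneg x).trans hx')]

end SupportFunction

section WulffShapeComparison

variable {d : ℕ} {P P' : EuclideanSpace ℝ (Fin d) → ℝ} {a θ : EuclideanSpace ℝ (Fin d)}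
  {ρ δ R : ℝ}

lemma suppFn_wulffShape_le_add (hδ : 0 ≤ δ) (hδρ : δ ≤ ρ)
    (ha : ∀ θ, ‖θ‖ = 1 → ⟪a, θ⟫ + (ρ - δ) ≤ P θ) (hP' : ∀ θ, ‖θ‖ = 1 → P' θ ≤ P θ + δ)
    (hW : wulffShape P ⊆ Metric.closedBall 0 R) (hW' : wulffShape P' ⊆ Metric.closedBall 0 R)
    (hne : (wulffShape P').Nonempty) (hθ : ‖θ‖ ≤ 1) :
    suppFn (wulffShape P') θ ≤ suppFn (wulffShape P) θ + δ / ρ * (2 * R) := by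
  have haR : ‖a‖ ≤ R := mem_closedBall_zero_iff.1 <| hW fun θ hθ ↦ by
    linarith [ha θ hθ]
  refine suppFn_le_add_of_forall_exists_norm_sub_le (Metric.isBounded_closedBall.subset hW) hne
    (fun x hx ↦ ?_) hθ
  obtain ⟨y, hy, hxy⟩ := exists_mem_wulffShape_norm_sub_le hδ hδρ ha fun θ hθ ↦
    (hx θ hθ).trans (hP' θ hθ)
  refine ⟨y, hy, hxy.trans ?_⟩
  have hxR : ‖x‖ ≤ R := mem_closedBall_zero_iff.1 (hW' hx)
  gcongr
  · exact div_nonneg hδ (hδ.trans hδρ)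
  · linarith [norm_sub_le x a]

lemma abs_suppFn_wulffShape_sub_le (hδ : 0 ≤ δ) (hδρ : δ ≤ ρ)
    (ha : ∀ θ, ‖θ‖ = 1 → ⟪a, θ⟫ + ρ ≤ P θ) (hPP' : ∀ θ, ‖θ‖ = 1 → |P θ - P' θ| ≤ δ)
    (hW : wulffShape P ⊆ Metric.closedBall 0 R) (hW' : wulffShape P' ⊆ Metric.closedBall 0 R)
    (hθ : ‖θ‖ ≤ 1) :
    |suppFn (wulffShape P) θ - suppFn (wulffShape P') θ| ≤ δ / ρ * (2 * R) := by
  have hdiff := fun θ hθ ↦ abs_le.1 (hPP' θ hθ)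
  have haW : a ∈ wulffShape P := fun θ hθ ↦ by linarith [ha θ hθ]
  have haW' : a ∈ wulffShape P' := fun θ hθ ↦ by linarith [ha θ hθ, hdiff θ hθ]
  rw [abs_sub_le_iff, sub_le_iff_le_add', sub_le_iff_le_add']
  constructor
  · refine suppFn_wulffShape_le_add (a := a) hδ hδρ (fun θ hθ ↦ ?_) (fun θ hθ ↦ ?_) hW' hW
      ⟨a, haW⟩ hθ
    · linarith [ha θ hθ, hdiff θ hθ]
    · linarith [hdiff θ hθ]
  · refine suppFn_wulffShape_le_add (a := a) hδ hδρ (fun θ hθ ↦ ?_) (fun θ hθ ↦ ?_) hW hW'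
      ⟨a, haW'⟩ hθ
    · linarith [ha θ hθ]
    · linarith [hdiff θ hθ]

end WulffShapeComparison

section IsotropicMeasure

open Module

variable {E : Type*} [NormedAddCommGroup E] [InnerProductSpace ℝ E] [MeasurableSpace E]
  {σ : Measure E}

lemma ae_abs_inner_le_one (hσ : ∀ᵐ θ ∂σ, ‖θ‖ = 1) {u : E} (hu : ‖u‖ = 1) :
    ∀ᵐ θ ∂σ, |⟪u, θ⟫| ≤ 1 :=
  hσ.mono fun θ hθ ↦ (abs_real_inner_le_norm u θ).trans (by rw [hu, hθ, one_mul])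

variable [FiniteDimensional ℝ E] [BorelSpace E]

lemma integral_inner_sq_eq_of_norm_eq (hinv : ∀ e : E ≃ₗᵢ[ℝ] E, σ.map e = σ) {u v : E}
    (huv : ‖u‖ = ‖v‖) : ∫ θ, ⟪u, θ⟫ ^ 2 ∂σ = ∫ θ, ⟪v, θ⟫ ^ 2 ∂σ := by
  set e : E ≃ₗᵢ[ℝ] E := (ℝ ∙ (u - v))ᗮ.reflection
  calc ∫ θ, ⟪u, θ⟫ ^ 2 ∂σ = ∫ θ, ⟪e u, e θ⟫ ^ 2 ∂σ := by simp_rw [e.inner_map_map]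
    _ = ∫ θ, ⟪v, θ⟫ ^ 2 ∂(σ.map e) := by
      rw [Submodule.reflection_sub huv, integral_map e.continuous.aemeasurable (by fun_prop)]
    _ = ∫ θ, ⟪v, θ⟫ ^ 2 ∂σ := by rw [hinv]

variable [IsProbabilityMeasure σ]

lemma integrable_abs_inner (hσ : ∀ᵐ θ ∂σ, ‖θ‖ = 1) {u : E} (hu : ‖u‖ = 1) :
    Integrable (fun θ ↦ |⟪u, θ⟫|) σ :=
  .of_bound (by fun_prop) 1 (by simpa using ae_abs_inner_le_one hσ hu)

lemma integrable_inner_sq (hσ : ∀ᵐ θ ∂σ, ‖θ‖ = 1) {u : E} (hu : ‖u‖ = 1) :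
    Integrable (fun θ ↦ ⟪u, θ⟫ ^ 2) σ :=
  .of_bound (by fun_prop) 1 <| (ae_abs_inner_le_one hσ hu).mono fun θ h ↦ by
    simpa [sq_le_one_iff_abs_le_one] using h

lemma integral_inner_sq_eq_one_div_finrank (hσ : ∀ᵐ θ ∂σ, ‖θ‖ = 1)
    (hinv : ∀ e : E ≃ₗᵢ[ℝ] E, σ.map e = σ) {u : E} (hu : ‖u‖ = 1) :
    ∫ θ, ⟪u, θ⟫ ^ 2 ∂σ = 1 / finrank ℝ E := by
  let b := stdOrthonormalBasis ℝ E
  have hsum : ∑ i, ∫ θ, ⟪b i, θ⟫ ^ 2 ∂σ = 1 := by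
    rw [← integral_finsetSum _ fun i _ ↦ integrable_inner_sq hσ (b.orthonormal.1 i)]
    rw [integral_congr_ae (g := fun _ ↦ 1) (hσ.mono fun θ hθ ↦ by simp [b.sum_sq_inner_right, hθ])]
    simp
  simp_rw [integral_inner_sq_eq_of_norm_eq hinv ((b.orthonormal.1 _).trans hu.symm),
    Finset.sum_const, Finset.card_univ, Fintype.card_fin, nsmul_eq_mul] at hsum
  exact eq_one_div_of_mul_eq_one_right hsum

lemma integral_abs_inner_le (hσ : ∀ᵐ θ ∂σ, ‖θ‖ = 1) (hinv : ∀ e : E ≃ₗᵢ[ℝ] E, σ.map e = σ)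
    {u : E} (hu : ‖u‖ = 1) : ∫ θ, |⟪u, θ⟫| ∂σ ≤ 1 / √(finrank ℝ E) := by
  have hsq := integrable_inner_sq hσ hu
  have hjensen := Real.strictConcaveOn_sqrt.concaveOn.le_map_integral (μ := σ)
    (Real.continuous_sqrt.continuousOn) isClosed_Ici (.of_forall fun θ ↦ sq_nonneg ⟪u, θ⟫) hsq
    (by simpa [Function.comp_def, Real.sqrt_sq_eq_abs] using integrable_abs_inner hσ hu)
  simpa [Real.sqrt_sq_eq_abs, integral_inner_sq_eq_one_div_finrank hσ hinv hu] using hjensen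

lemma norm_integral_smul_le (hσ : ∀ᵐ θ ∂σ, ‖θ‖ = 1) (hinv : ∀ e : E ≃ₗᵢ[ℝ] E, σ.map e = σ)
    {f : E → ℝ} (hf : AEStronglyMeasurable f σ) {ε : ℝ} (hfε : ∀ᵐ θ ∂σ, |f θ| ≤ ε) :
    ‖∫ θ, f θ • θ ∂σ‖ ≤ ε / √(finrank ℝ E) := by
  have hε : 0 ≤ ε := by
    obtain ⟨θ, hθ⟩ := hfε.exists
    exact (abs_nonneg _).trans hθ
  set w := ∫ θ, f θ • θ ∂σ
  rcases eq_or_ne w 0 with hw | hw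
  · rw [hw, norm_zero]
    positivity
  have hint : Integrable (fun θ ↦ f θ • θ) σ :=
    .of_bound (hf.smul aestronglyMeasurable_id) ε <| (hσ.and hfε).mono fun θ ⟨hθ, hfθ⟩ ↦ by
      rwa [norm_smul, hθ, mul_one, Real.norm_eq_abs]
  set u := ‖w‖⁻¹ • w
  have hu : ‖u‖ = 1 := norm_smul_inv_norm hw
  calc ‖w‖ = ⟪u, w⟫ := by
        rw [real_inner_smul_left, real_inner_self_eq_norm_sq]
        field_simp
    _ = ∫ θ, f θ * ⟪u, θ⟫ ∂σ := by
        rw [← integral_inner hint]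
        simp_rw [real_inner_smul_right]
    _ ≤ ∫ θ, ε * |⟪u, θ⟫| ∂σ := by
        refine integral_mono_ae ?_ ((integrable_abs_inner hσ hu).const_mul ε) ?_
        · refine .of_bound (hf.mul (by fun_prop)) ε ?_
          filter_upwards [hfε, ae_abs_inner_le_one hσ hu] with θ hfθ huθ
          rw [Real.norm_eq_abs, abs_mul]
          exact (mul_le_of_le_one_right (abs_nonneg _) huθ).trans hfθ
        · filter_upwards [hfε] with θ hfθ
          exact ((le_abs_self _).trans_eq (abs_mul _ _)).trans (by gcongr)
    _ = ε * ∫ θ, |⟪u, θ⟫| ∂σ := integral_const_mul ε _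
    _ ≤ ε / √(finrank ℝ E) := by
        rw [div_eq_mul_one_div]
        exact mul_le_mul_of_nonneg_left (integral_abs_inner_le hσ hinv hu) hε

end IsotropicMeasure

section SteinerPoint

variable {d : ℕ}

lemma sphereMeasure_eq_zero_or_isProbabilityMeasure :
    sphereMeasure d = 0 ∨ IsProbabilityMeasure (sphereMeasure d) := by
  refine (em _).imp ProbabilityTheory.cond_eq_zero.2 fun h ↦ ?_
  rw [not_or] at h
  exact ProbabilityTheory.cond_isProbabilityMeasure_of_finite h.2 h.1

lemma ae_norm_eq_one_sphereMeasure : ∀ᵐ θ ∂sphereMeasure d, ‖θ‖ = 1 := by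
  refine Measure.ae_smul_measure ?_ _
  exact (ae_restrict_mem Metric.isClosed_sphere.measurableSet).mono fun θ hθ ↦
    mem_sphere_zero_iff_norm.1 hθ

lemma map_sphereMeasure (e : EuclideanSpace ℝ (Fin d) ≃ₗᵢ[ℝ] EuclideanSpace ℝ (Fin d)) :
    (sphereMeasure d).map e = sphereMeasure d := by
  set S := Metric.sphere (0 : EuclideanSpace ℝ (Fin d)) 1
  have hS : e ⁻¹' S = S := by ext; simp [S]
  have hμH : (μH[(d : ℝ) - 1].restrict S).map e = μH[(d : ℝ) - 1].restrict S := by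
    calc (μH[(d : ℝ) - 1].restrict S).map e = (μH[(d : ℝ) - 1].restrict (e ⁻¹' S)).map e := by
          rw [hS]
      _ = (μH[(d : ℝ) - 1].map e).restrict S :=
          (Measure.restrict_map e.continuous.measurable Metric.isClosed_sphere.measurableSet).symm
      _ = μH[(d : ℝ) - 1].restrict S := by
          rw [e.isometry.map_hausdorffMeasure (.inr e.surjective), e.surjective.range_eq,
            Measure.restrict_univ]
  rw [sphereMeasure, Measure.map_smul, hμH]

variable {K L : Set (EuclideanSpace ℝ (Fin d))} {R : ℝ}

lemma integrable_suppFn_smul [IsFiniteMeasure (sphereMeasure d)]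
    (hK : K ⊆ Metric.closedBall 0 R) (hne : K.Nonempty) :
    Integrable (fun θ ↦ suppFn K θ • θ) (sphereMeasure d) := by
  refine .of_bound ((lipschitzWith_suppFn hK).continuous.smul continuous_id).aestronglyMeasurable
    R (ae_norm_eq_one_sphereMeasure.mono fun θ hθ ↦ ?_)
  simpa [norm_smul, hθ] using abs_suppFn_le (θ := θ) hK hne

lemma norm_steinerPoint_sub_le [IsProbabilityMeasure (sphereMeasure d)]
    (hK : K ⊆ Metric.closedBall 0 R) (hL : L ⊆ Metric.closedBall 0 R) (hKne : K.Nonempty)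
    (hLne : L.Nonempty) {ε : ℝ} (h : ∀ θ, ‖θ‖ = 1 → |suppFn K θ - suppFn L θ| ≤ ε) :
    ‖steinerPoint K - steinerPoint L‖ ≤ √d * ε := by
  have hcont := (lipschitzWith_suppFn hK).continuous.sub (lipschitzWith_suppFn hL).continuous
  have hbound := norm_integral_smul_le ae_norm_eq_one_sphereMeasure map_sphereMeasure
    hcont.aestronglyMeasurable (ae_norm_eq_one_sphereMeasure.mono h)
  rw [finrank_euclideanSpace_fin] at hbound
  simp_rw [Pi.sub_apply, sub_smul] at hbound
  rw [integral_sub (integrable_suppFn_smul hK hKne) (integrable_suppFn_smul hL hLne)] at hbound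
  calc ‖steinerPoint K - steinerPoint L‖
      = d * ‖∫ θ, suppFn K θ • θ ∂sphereMeasure d - ∫ θ, suppFn L θ • θ ∂sphereMeasure d‖ := by
        rw [steinerPoint, steinerPoint, ← smul_sub, norm_smul, Real.norm_natCast]
    _ ≤ d * (ε / √d) := by gcongr
    _ = √d * ε := by rw [mul_div_left_comm, Real.div_sqrt, mul_comm]

end SteinerPoint

theorem stmt_15_general {d : ℕ} (q Rmin Rmax r : ℝ) (hq : q ∈ Set.Ioo (1 / 2 : ℝ) 1)
    (hRmin : 0 < Rmin)
    (μ ν : Measure (EuclideanSpace ℝ (Fin d))) [IsProbabilityMeasure μ] [IsProbabilityMeasure ν]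
    (hball : ∃ a, Metric.closedBall a (Rmin / 2) ⊆ floatingBody μ q)
    (hcontX : floatingBody μ q ⊆ Metric.closedBall 0 (Rmax + r))
    (hcontY : floatingBody ν q ⊆ Metric.closedBall 0 (Rmax + r))
    (hδ : deltaQ μ ν q ≤ Rmin / 4) :
    ‖steinerPoint (floatingBody μ q) - steinerPoint (floatingBody ν q)‖ ≤
      6 * Real.sqrt d * ((Rmax + r) / Rmin) * deltaQ μ ν q := by
  obtain ⟨hq₀, hq₁⟩ := hq
  obtain ⟨a, ha⟩ := hball
  set δ := deltaQ μ ν q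
  have hδ₀ : 0 ≤ δ := Real.iSup_nonneg fun _ ↦ abs_nonneg _
  have haμ : a ∈ floatingBody μ q := ha (Metric.mem_closedBall_self (by positivity))
  have hR : 0 ≤ Rmax + r := (norm_nonneg a).trans (mem_closedBall_zero_iff.1 (hcontX haμ))
  -- `sphereMeasure d` is the junk value `0` if `μH[d - 1]` of the sphere is `0` or `∞`.
  rcases sphereMeasure_eq_zero_or_isProbabilityMeasure (d := d) with h | _
  · simp only [steinerPoint, h, integral_zero_measure, smul_zero, sub_zero, norm_zero]
    positivity
  have hmargin : ∀ θ, ‖θ‖ = 1 → ⟪a, θ⟫ + Rmin / 2 ≤ dirQuantile μ q θ := fun θ hθ ↦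
    inner_add_le_of_closedBall_subset_wulffShape (by positivity) ha hθ
  have hQ : ∀ θ, ‖θ‖ = 1 → |dirQuantile μ q θ - dirQuantile ν q θ| ≤ δ := fun θ hθ ↦
    abs_dirQuantile_sub_le_deltaQ μ ν (by linarith) hq₁ hθ
  have haν : a ∈ floatingBody ν q := fun θ hθ ↦ by
    linarith [hmargin θ hθ, (abs_le.1 (hQ θ hθ)).2]
  calc _ ≤ √d * (δ / (Rmin / 2) * (2 * (Rmax + r))) :=
        norm_steinerPoint_sub_le hcontX hcontY ⟨a, haμ⟩ ⟨a, haν⟩ fun θ hθ ↦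
          abs_suppFn_wulffShape_sub_le hδ₀ (by linarith) hmargin hQ hcontX hcontY hθ.le
    _ = 4 * √d * ((Rmax + r) / Rmin) * δ := by field_simp; ring
    _ ≤ 6 * √d * ((Rmax + r) / Rmin) * δ := by gcongr; norm_num

/-- Approximate Lipschitzness of the Steiner point of the floating body:
`‖S(F_q(X)) - S(F_q(Y))‖ ≤ 6 √d ((R_max + r)/R_min) ⋅ δ_q(X,Y)` under the stated conditions. -/
theorem stmt_15 {d : ℕ} (q Rmin Rmax r : ℝ) (hq : q ∈ Set.Ioo (1 / 2 : ℝ) 1)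
    (hRmin : 0 < Rmin) (hRmax : 0 < Rmax) (hr : 0 < r)
    (μ ν : Measure (EuclideanSpace ℝ (Fin d))) [IsProbabilityMeasure μ] [IsProbabilityMeasure ν]
    (hball : ∃ a, Metric.closedBall a (Rmin / 2) ⊆ floatingBody μ q)
    (hcontX : floatingBody μ q ⊆ Metric.closedBall 0 (Rmax + r))
    (hcontY : floatingBody ν q ⊆ Metric.closedBall 0 (Rmax + r))
    (hδ : deltaQ μ ν q ≤ Rmin / 4) :
    ‖steinerPoint (floatingBody μ q) - steinerPoint (floatingBody ν q)‖ ≤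
      6 * Real.sqrt d * ((Rmax + r) / Rmin) * deltaQ μ ν q :=
  stmt_15_general q Rmin Rmax r hq hRmin μ ν hball hcontX hcontY hδ
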